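/- Let 1 ≤ p < ∞ and A ∈ C. Suppose there exist a positive integer N₀ and α > 2(5+2^{1−p})^{1/p} · inf_{0 ≤ s ≤ N₀}( ‖A−A_s‖_C + (s/N₀)‖A‖_C ) such that ‖χ_n^{2N₀} A χ_n^{N₀} c‖_p ≥ α‖χ_n^{N₀} c‖_p for all c ∈ ℓ^p(ℤ) and all n ∈ N₀ℤ. Then A has ℓ^p-stability: there exists C₁ > 0 with ‖Ac‖_p ≥ C₁‖c‖_p for all c ∈ ℓ^p(ℤ). -/

import Mathlib

open MeasureTheory ENNReal Filter

noncomputable def lpNorm (p : ℝ≥0∞) (c : ℤ → ℂ) : ℝ≥0∞ :=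
  eLpNorm c p Measure.count

noncomputable def rowSup (a : ℤ → ℤ → ℂ) (k : ℤ) : ℝ≥0∞ :=
  ⨆ j : ℤ, (‖a j (j - k)‖₊ : ℝ≥0∞)

noncomputable def normC (a : ℤ → ℤ → ℂ) : ℝ≥0∞ := ∑' k : ℤ, rowSup a k

noncomputable def matMul (a : ℤ → ℤ → ℂ) (c : ℤ → ℂ) : ℤ → ℂ :=
  fun j => ∑' j' : ℤ, a j j' * c j'

noncomputable def trunc (a : ℤ → ℤ → ℂ) (s : ℕ) : ℤ → ℤ → ℂ :=
  fun i j => if |i - j| < (s : ℤ) then a i j else 0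

noncomputable def chiProj (y : ℤ) (N : ℕ) (c : ℤ → ℂ) : ℤ → ℂ :=
  fun j => if |j - y| < (N : ℤ) then c j else 0

noncomputable def psi0 (x : ℝ) : ℝ := max (min (2 - 2 * |x|) 1) 0

noncomputable def Psi (n : ℤ) (N : ℕ) (c : ℤ → ℂ) : ℤ → ℂ :=
  fun j => (psi0 (((j - n : ℤ) : ℝ) / (N : ℝ)) : ℂ) * c j


/-
Cover ℤ by the windows of width `2N₀` centred at the points of `N₀ℤ`, with the tent cutoffs
`ψₘ = psi0 ((· - N₀ m) / N₀)`; at every point the `p`-th powers of the `ψₘ` sum to a number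
between `1` and `2`. The hypothesis applied to `ψₘ c` bounds `α ‖ψₘ c‖` by `‖A ψₘ c‖`, and
`A ψₘ c = ψₘ A c + (A - Aₛ) ψₘ c - ψₘ (A - Aₛ) c + [Aₛ, ψₘ] c`. As `ψₘ` is `2/N₀`-Lipschitz, the
commutator has `C`-norm at most `2 (s/N₀) ‖A‖_C`, and it only sees `c` on a window of width `4N₀`.
Summing `p`-th powers over `m` (Minkowski in `ℓᵖ(ℤ)`) and using `‖B c‖ₚ ≤ ‖B‖_C ‖c‖ₚ` gives
`α ‖c‖ ≤ 2^{1/p} ‖A c‖ + 2·4^{1/p} (‖A - Aₛ‖_C + (s/N₀) ‖A‖_C) ‖c‖`, and the assumption on `α`,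
for a suitable `s ≤ N₀`, leaves a positive multiple of `‖c‖` on the left.
-/

lemma ENNReal.tsub_div_mul_le_of_mul_le_add {α β D x y : ℝ≥0∞} (hx : x ≠ ⊤)
    (h : α * x ≤ D * y + β * x) : (α - β) / D * x ≤ y := by
  have h' : (α - β) * x ≤ y * D := by
    rw [ENNReal.sub_mul fun _ _ => hx, tsub_le_iff_right, mul_comm y]
    exact h
  rw [div_eq_mul_inv, mul_right_comm, ← div_eq_mul_inv]
  exact ENNReal.div_le_of_le_mul h'

section LpSeminorm
variable {α : Type*} [MeasurableSpace α] {μ : Measure α} {p : ℝ≥0∞}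

lemma eLpNorm_count_rpow [MeasurableSingletonClass α] {ε : Type*} [ENorm ε] (hp : p ≠ 0)
    (hp' : p ≠ ⊤) (f : α → ε) :
    eLpNorm f p Measure.count ^ p.toReal = ∑' x, ‖f x‖ₑ ^ p.toReal := by
  rw [eLpNorm_eq_lintegral_rpow_enorm_toReal hp hp', lintegral_count, one_div,
    ENNReal.rpow_inv_rpow (ENNReal.toReal_pos hp hp').ne']

lemma eLpNorm_const_mul {f : α → ℝ≥0∞} (hf : AEMeasurable f μ) (hp : p ≠ ⊤) (r : ℝ≥0∞) :
    eLpNorm (fun x => r * f x) p μ = r * eLpNorm f p μ := by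
  rcases eq_or_ne p 0 with rfl | hp0
  · simp
  have hq : 0 < p.toReal := ENNReal.toReal_pos hp0 hp
  simp_rw [eLpNorm_eq_lintegral_rpow_enorm_toReal hp0 hp, enorm_eq_self,
    ENNReal.mul_rpow_of_nonneg _ _ hq.le]
  rw [lintegral_const_mul'' _ (hf.pow_const _), ENNReal.mul_rpow_of_nonneg _ _ (by positivity),
    one_div, ENNReal.rpow_rpow_inv hq.ne']

lemma eLpNorm_iSup_of_directed {ι : Type*} [Countable ι] {h : ι → α → ℝ≥0∞}
    (hh : ∀ i, AEMeasurable (h i) μ) (hd : Directed (· ≤ ·) h) (hp : p ≠ ⊤) :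
    eLpNorm (fun x => ⨆ i, h i x) p μ = ⨆ i, eLpNorm (h i) p μ := by
  rcases eq_or_ne p 0 with rfl | hp0
  · simp
  have hq : 0 < p.toReal := ENNReal.toReal_pos hp0 hp
  have rpow_iSup {r : ℝ} (hr : 0 < r) (g : ι → ℝ≥0∞) : (⨆ i, g i) ^ r = ⨆ i, g i ^ r :=
    (ENNReal.orderIsoRpow r hr).map_iSup g
  have hd' : Directed (· ≤ ·) fun i x => h i x ^ p.toReal :=
    hd.mono_comp (g := fun f x => f x ^ p.toReal) _ fun _ _ hfg x =>
      ENNReal.rpow_le_rpow (hfg x) hq.le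
  simp_rw [eLpNorm_eq_lintegral_rpow_enorm_toReal hp0 hp, enorm_eq_self, rpow_iSup hq]
  rw [lintegral_iSup_directed (fun i => (hh i).pow_const _) hd', rpow_iSup (by positivity)]

lemma eLpNorm_tsum_le {ι : Type*} [Countable ι] {g : ι → α → ℝ≥0∞}
    (hg : ∀ i, AEMeasurable (g i) μ) (hp : 1 ≤ p) (hp' : p ≠ ⊤) :
    eLpNorm (fun x => ∑' i, g i x) p μ ≤ ∑' i, eLpNorm (g i) p μ := by
  have hdir : Directed (· ≤ ·) fun (s : Finset ι) x => ∑ i ∈ s, g i x :=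
    Monotone.directed_le fun s t hst x => Finset.sum_le_sum_of_subset hst
  simp_rw [ENNReal.tsum_eq_iSup_sum]
  rw [eLpNorm_iSup_of_directed (fun s => Finset.aemeasurable_fun_sum s fun i _ => hg i) hdir hp']
  refine iSup_mono fun s => ?_
  rw [← Finset.sum_fn]
  exact eLpNorm_sum_le (fun i _ => (hg i).aestronglyMeasurable) hp

end LpSeminorm

section ConvolutionDominated
variable {p : ℝ≥0∞}

lemma lpNorm_mono {c d : ℤ → ℂ} (h : ∀ j, ‖c j‖ₑ ≤ ‖d j‖ₑ) : lpNorm p c ≤ lpNorm p d :=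
  eLpNorm_mono_enorm h

lemma lpNorm_comp_sub (c : ℤ → ℂ) (k : ℤ) : lpNorm p (fun j => c (j - k)) = lpNorm p c :=
  eLpNorm_comp_measurePreserving Measurable.of_discrete.aestronglyMeasurable
    (measurePreserving_sub_right Measure.count k)

lemma enorm_le_rowSup (b : ℤ → ℤ → ℂ) (i k : ℤ) : ‖b i (i - k)‖ₑ ≤ rowSup b k :=
  le_iSup (fun i => ‖b i (i - k)‖ₑ) i

lemma enorm_matMul_le (b : ℤ → ℤ → ℂ) (c : ℤ → ℂ) (j : ℤ) :
    ‖matMul b c j‖ₑ ≤ ∑' k, rowSup b k * ‖c (j - k)‖ₑ :=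
  calc ‖matMul b c j‖ₑ ≤ ∑' j', ‖b j j' * c j'‖ₑ := enorm_tsum_le_tsum_enorm
    _ = ∑' k, ‖b j (j - k)‖ₑ * ‖c (j - k)‖ₑ := by
      rw [← (Equiv.subLeft j).tsum_eq]
      simp [enorm_mul]
    _ ≤ ∑' k, rowSup b k * ‖c (j - k)‖ₑ :=
      ENNReal.tsum_le_tsum fun k => by gcongr; exact enorm_le_rowSup b j k

theorem lpNorm_matMul_le (hp : 1 ≤ p) (hp' : p ≠ ⊤) (b : ℤ → ℤ → ℂ) (c : ℤ → ℂ) :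
    lpNorm p (matMul b c) ≤ normC b * lpNorm p c :=
  calc lpNorm p (matMul b c)
      ≤ eLpNorm (fun j => ∑' k, rowSup b k * ‖c (j - k)‖ₑ) p Measure.count :=
        eLpNorm_mono_enorm fun j => (enorm_matMul_le b c j).trans_eq (enorm_eq_self _).symm
    _ ≤ ∑' k, eLpNorm (fun j => rowSup b k * ‖c (j - k)‖ₑ) p Measure.count :=
        eLpNorm_tsum_le (fun _ => Measurable.of_discrete.aemeasurable) hp hp'
    _ = normC b * lpNorm p c := by
        rw [normC, ← ENNReal.tsum_mul_right]
        congr 1 with k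
        rw [eLpNorm_const_mul Measurable.of_discrete.aemeasurable hp', eLpNorm_enorm]
        exact congrArg _ (lpNorm_comp_sub c k)

lemma tsum_enorm_le_normC (b : ℤ → ℤ → ℂ) (i : ℤ) : ∑' j, ‖b i j‖ₑ ≤ normC b := by
  rw [← (Equiv.subLeft i).tsum_eq]
  exact ENNReal.tsum_le_tsum fun k => enorm_le_rowSup b i k

lemma summable_mul_of_normC_ne_top {b : ℤ → ℤ → ℂ} (hb : normC b ≠ ⊤) {c : ℤ → ℂ} {M : ℝ≥0∞}
    (hc : ∀ j, ‖c j‖ₑ ≤ M) (hM : M ≠ ⊤) (i : ℤ) : Summable fun j => b i j * c j := by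
  refine Summable.of_enorm (ne_top_of_le_ne_top (ENNReal.mul_ne_top hb hM) ?_)
  calc ∑' j, ‖b i j * c j‖ₑ ≤ ∑' j, ‖b i j‖ₑ * M :=
        ENNReal.tsum_le_tsum fun j => by rw [enorm_mul]; gcongr; exact hc j
    _ ≤ normC b * M := by rw [ENNReal.tsum_mul_right]; gcongr; exact tsum_enorm_le_normC b i

lemma normC_mono {b b' : ℤ → ℤ → ℂ} (h : ∀ i j, ‖b i j‖ₑ ≤ ‖b' i j‖ₑ) : normC b ≤ normC b' :=
  ENNReal.tsum_le_tsum fun k => iSup_mono fun i => h i (i - k)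

lemma normC_sub_trunc_le (a : ℤ → ℤ → ℂ) (s : ℕ) :
    normC (fun i j => a i j - trunc a s i j) ≤ normC a :=
  normC_mono fun i j => by unfold trunc; split_ifs <;> simp

end ConvolutionDominated

section Commutator

-- The matrix of `b ∘ w - w ∘ b`, where `w` acts by pointwise multiplication.
def commutatorMul (b : ℤ → ℤ → ℂ) (w : ℤ → ℂ) : ℤ → ℤ → ℂ := fun i j => b i j * (w j - w i)

variable {a : ℤ → ℤ → ℂ} {w : ℤ → ℂ}

lemma normC_commutatorMul_trunc_le {s : ℕ} {δ : ℝ≥0∞}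
    (hw : ∀ i j : ℤ, |i - j| < s → ‖w j - w i‖ₑ ≤ δ) :
    normC (commutatorMul (trunc a s) w) ≤ δ * normC a := by
  rw [normC, normC, ← ENNReal.tsum_mul_left]
  refine ENNReal.tsum_le_tsum fun k => iSup_le fun i => ?_
  change ‖commutatorMul (trunc a s) w i (i - k)‖ₑ ≤ δ * rowSup a k
  simp only [commutatorMul, trunc]
  split_ifs with h
  · rw [enorm_mul, mul_comm δ]
    exact mul_le_mul' (enorm_le_rowSup a i k) (hw _ _ h)
  · simp

lemma matMul_commutatorMul_trunc_chiProj {s N : ℕ} {n : ℤ} (hs : s ≤ N)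
    (hw : ∀ j, (N : ℤ) ≤ |j - n| → w j = 0) (c : ℤ → ℂ) :
    matMul (commutatorMul (trunc a s) w) (chiProj n (2 * N) c)
      = matMul (commutatorMul (trunc a s) w) c := by
  funext i
  refine tsum_congr fun j => ?_
  unfold chiProj
  split_ifs with hj
  · rfl
  have hsN : (s : ℤ) ≤ N := by exact_mod_cast hs
  have hj' : 2 * (N : ℤ) ≤ |j - n| := by push_cast at hj; linarith
  suffices commutatorMul (trunc a s) w i j = 0 by simp [this]
  unfold commutatorMul trunc
  split_ifs with hij
  · have htri : |j - n| - |i - n| ≤ |i - j| := by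
      rw [abs_sub_comm i j]
      simpa using abs_sub_abs_le_abs_sub (j - n) (i - n)
    rw [hw j (by linarith), hw i (by linarith)]
    simp
  · simp

lemma matMul_mul_eq (hA : normC a ≠ ⊤) {c : ℤ → ℂ} {M : ℝ≥0∞} (hc : ∀ j, ‖c j‖ₑ ≤ M)
    (hM : M ≠ ⊤) (hw : ∀ j, ‖w j‖ₑ ≤ 1) (s : ℕ) :
    matMul a (w * c)
      = w * matMul a c + matMul (fun i j => a i j - trunc a s i j) (w * c)
        - w * matMul (fun i j => a i j - trunc a s i j) c
        + matMul (commutatorMul (trunc a s) w) c := by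
  set E := fun i j => a i j - trunc a s i j
  set B := commutatorMul (trunc a s) w
  have hE : normC E ≠ ⊤ := ne_top_of_le_ne_top hA (normC_sub_trunc_le a s)
  have hB : normC B ≠ ⊤ := by
    refine ne_top_of_le_ne_top (ENNReal.mul_ne_top (by norm_num) hA)
      (normC_commutatorMul_trunc_le (δ := 2) fun i j _ => ?_)
    calc ‖w j - w i‖ₑ ≤ ‖w j‖ₑ + ‖w i‖ₑ := enorm_sub_le
      _ ≤ 2 := by rw [← one_add_one_eq_two]; exact add_le_add (hw j) (hw i)
  have hwc : ∀ j, ‖(w * c) j‖ₑ ≤ M := fun j => by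
    rw [Pi.mul_apply, enorm_mul, ← one_mul M]
    exact mul_le_mul' (hw j) (hc j)
  funext i
  have hAc := summable_mul_of_normC_ne_top hA hc hM i
  have hEwc : Summable fun j => E i j * (w j * c j) := summable_mul_of_normC_ne_top hE hwc hM i
  have hEc := summable_mul_of_normC_ne_top hE hc hM i
  have hBc := summable_mul_of_normC_ne_top hB hc hM i
  have hterm : ∀ j, a i j * (w j * c j)
      = w i * (a i j * c j) + E i j * (w j * c j) - w i * (E i j * c j) + B i j * c j := by
    intro j
    simp only [E, B, commutatorMul]
    ring
  simp only [matMul, Pi.add_apply, Pi.sub_apply, Pi.mul_apply]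
  rw [tsum_congr hterm, ((hAc.mul_left _).add hEwc |>.sub (hEc.mul_left _)).tsum_add hBc,
    ((hAc.mul_left _).add hEwc).tsum_sub (hEc.mul_left _), (hAc.mul_left _).tsum_add hEwc,
    tsum_mul_left, tsum_mul_left]

end Commutator

section Cutoff

lemma Complex.enorm_ofReal (x : ℝ) : ‖(x : ℂ)‖ₑ = ‖x‖ₑ := by
  rw [enorm_eq_nnnorm, Complex.nnnorm_real, enorm_eq_nnnorm]

lemma psi0_nonneg (x : ℝ) : 0 ≤ psi0 x := le_max_right _ _

lemma psi0_le_one (x : ℝ) : psi0 x ≤ 1 := max_le (min_le_right _ _) zero_le_one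

lemma psi0_eq_zero {x : ℝ} (h : 1 ≤ |x|) : psi0 x = 0 :=
  max_eq_right ((min_le_left _ _).trans (by linarith))

lemma psi0_eq_one {x : ℝ} (h : |x| ≤ 1 / 2) : psi0 x = 1 := by
  rw [psi0, min_eq_right (by linarith), max_eq_left zero_le_one]

lemma abs_psi0_sub_le (x y : ℝ) : |psi0 x - psi0 y| ≤ 2 * |x - y| :=
  calc |psi0 x - psi0 y| ≤ |min (2 - 2 * |x|) 1 - min (2 - 2 * |y|) 1| :=
        abs_max_sub_max_le_abs _ _ _
    _ ≤ max |2 - 2 * |x| - (2 - 2 * |y|)| |(1 : ℝ) - 1| := abs_min_sub_min_le_max _ _ _ _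
    _ = 2 * |(|x| - |y|)| := by
        rw [sub_self, abs_zero, max_eq_left (abs_nonneg _),
          show 2 - 2 * |x| - (2 - 2 * |y|) = -(2 * (|x| - |y|)) by ring, abs_neg, abs_mul, abs_two]
    _ ≤ 2 * |x - y| := mul_le_mul_of_nonneg_left (abs_abs_sub_abs_le_abs_sub x y) zero_le_two

noncomputable def psi (n : ℤ) (N : ℕ) (j : ℤ) : ℂ := (psi0 (((j - n : ℤ) : ℝ) / (N : ℝ)) : ℂ)

variable {n i j : ℤ} {N : ℕ}

lemma Psi_eq_psi_mul (c : ℤ → ℂ) : Psi n N c = psi n N * c := rfl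

lemma enorm_psi_le_one : ‖psi n N j‖ₑ ≤ 1 := by
  rw [psi, Complex.enorm_ofReal, Real.enorm_eq_ofReal (psi0_nonneg _)]
  exact ENNReal.ofReal_le_one.2 (psi0_le_one _)

lemma psi_eq_zero (hN : 0 < N) (h : (N : ℤ) ≤ |j - n|) : psi n N j = 0 := by
  have hN' : (0 : ℝ) < N := by exact_mod_cast hN
  rw [psi, psi0_eq_zero, Complex.ofReal_zero]
  rw [abs_div, abs_of_pos hN', le_div_iff₀ hN', one_mul, ← Int.cast_abs]
  exact_mod_cast h

lemma psi_eq_one (hN : 0 < N) (h : 2 * |j - n| ≤ N) : psi n N j = 1 := by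
  have hN' : (0 : ℝ) < N := by exact_mod_cast hN
  rw [psi, psi0_eq_one, Complex.ofReal_one]
  rw [abs_div, abs_of_pos hN', div_le_iff₀ hN', ← Int.cast_abs]
  have : (2 * |j - n| : ℝ) ≤ N := by exact_mod_cast h
  linarith

lemma enorm_psi_sub_le (hN : 0 < N) {s : ℕ} (h : |i - j| < s) :
    ‖psi n N j - psi n N i‖ₑ ≤ 2 * ((s : ℝ≥0∞) / N) := by
  have hN' : (0 : ℝ) < N := by exact_mod_cast hN
  have hdiff : |(((j - n : ℤ) : ℝ) / N) - ((i - n : ℤ) : ℝ) / N| ≤ s / N := by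
    rw [div_sub_div_same, abs_div, abs_of_pos hN']
    gcongr
    rw [← Int.cast_sub, sub_sub_sub_cancel_right, ← Int.cast_abs, abs_sub_comm]
    exact_mod_cast h.le
  rw [psi, psi, ← Complex.ofReal_sub, Complex.enorm_ofReal, Real.enorm_eq_ofReal_abs]
  calc ENNReal.ofReal |psi0 _ - psi0 _| ≤ ENNReal.ofReal (2 * (s / N)) :=
        ENNReal.ofReal_le_ofReal ((abs_psi0_sub_le _ _).trans (by gcongr))
    _ = 2 * ((s : ℝ≥0∞) / N) := by
        rw [ENNReal.ofReal_mul zero_le_two, ENNReal.ofReal_div_of_pos hN']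
        simp

lemma chiProj_Psi (hN : 0 < N) (c : ℤ → ℂ) : chiProj n N (Psi n N c) = Psi n N c := by
  funext j
  unfold chiProj
  split_ifs with h
  · rfl
  · rw [Psi_eq_psi_mul, Pi.mul_apply, psi_eq_zero hN (not_lt.1 h), zero_mul]

lemma chiProj_eq_mul (c : ℤ → ℂ) : chiProj n N c = chiProj n N 1 * c := by
  funext j
  simp only [chiProj, Pi.mul_apply, Pi.one_apply]
  split_ifs <;> simp

lemma enorm_chiProj_le (c : ℤ → ℂ) : ‖chiProj n N c j‖ₑ ≤ ‖c j‖ₑ := by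
  unfold chiProj
  split_ifs <;> simp

end Cutoff

section Windows
variable {N : ℕ}

lemma exists_two_mul_abs_sub_mul_le (hN : 0 < N) (j : ℤ) : ∃ m : ℤ, 2 * |j - N * m| ≤ N := by
  have h2N : (0 : ℤ) < 2 * N := by positivity
  have hr0 := Int.emod_nonneg (2 * j + N) h2N.ne'
  have hr1 := Int.emod_lt_of_pos (2 * j + N) h2N
  have hdiv := Int.mul_ediv_add_emod (2 * j + N) (2 * N)
  -- `j / N` rounded to the nearest integer
  refine ⟨(2 * j + N) / (2 * N), ?_⟩
  rw [← abs_two, ← abs_mul, abs_two, abs_le]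
  constructor <;> linarith

lemma tsum_le_of_eq_zero_of_le_abs (hN : 0 < N) (k : ℕ) {j : ℤ} {f : ℤ → ℝ≥0∞}
    (h1 : ∀ m, f m ≤ 1) (h0 : ∀ m, (k * N : ℤ) ≤ |j - N * m| → f m = 0) :
    ∑' m, f m ≤ 2 * k := by
  have hN' : (0 : ℤ) < N := by exact_mod_cast hN
  set t := j / (N : ℤ)
  have hsupp : ∀ m ∉ Finset.Ioc (t - k) (t + k), f m = 0 := by
    intro m hm
    refine h0 m (not_lt.1 fun hlt => hm ?_)
    rw [abs_lt] at hlt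
    have hr0 := Int.emod_nonneg j hN'.ne'
    have hr1 := Int.emod_lt_of_pos j hN'
    have hdiv := Int.mul_ediv_add_emod j N
    rw [Finset.mem_Ioc]
    constructor
    · by_contra hc
      have := mul_le_mul_of_nonneg_left (not_lt.1 hc) hN'.le
      linarith
    · by_contra hc
      have := mul_le_mul_of_nonneg_left (Int.add_one_le_of_lt (not_le.1 hc)) hN'.le
      linarith
  rw [tsum_eq_sum hsupp]
  calc ∑ m ∈ Finset.Ioc (t - k) (t + k), f m ≤ (Finset.Ioc (t - k) (t + k)).card • (1 : ℝ≥0∞) :=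
        Finset.sum_le_card_nsmul _ _ _ fun m _ => h1 m
    _ = 2 * k := by
        rw [Int.card_Ioc, nsmul_one, show t + k - (t - k) = ((2 * k : ℕ) : ℤ) by push_cast; ring,
          Int.toNat_natCast]
        norm_cast

lemma one_le_tsum_enorm_psi_rpow (hN : 0 < N) (q : ℝ) (j : ℤ) :
    1 ≤ ∑' m, ‖psi (N * m) N j‖ₑ ^ q := by
  obtain ⟨m, hm⟩ := exists_two_mul_abs_sub_mul_le hN j
  calc (1 : ℝ≥0∞) = ‖psi (N * m) N j‖ₑ ^ q := by
        rw [psi_eq_one hN hm, enorm_one, ENNReal.one_rpow]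
    _ ≤ _ := ENNReal.le_tsum m

lemma tsum_enorm_psi_rpow_le {q : ℝ} (hN : 0 < N) (hq : 0 < q) (j : ℤ) :
    ∑' m, ‖psi (N * m) N j‖ₑ ^ q ≤ 2 := by
  simpa using tsum_le_of_eq_zero_of_le_abs hN 1 (j := j)
    (fun m => ENNReal.rpow_le_one enorm_psi_le_one hq.le)
    fun m hm => by rw [psi_eq_zero hN (by simpa using hm), enorm_zero, ENNReal.zero_rpow_of_pos hq]

lemma tsum_enorm_chiProj_rpow_le {q : ℝ} (hN : 0 < N) (hq : 0 < q) (j : ℤ) :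
    ∑' m, ‖chiProj (N * m) (2 * N) 1 j‖ₑ ^ q ≤ 4 := by
  refine (tsum_le_of_eq_zero_of_le_abs hN 2 (j := j)
    (fun m => ENNReal.rpow_le_one ((enorm_chiProj_le 1).trans_eq enorm_one) hq.le)
    fun m hm => ?_).trans_eq (by norm_num)
  have hout : ¬|j - N * m| < ((2 * N : ℕ) : ℤ) := by push_cast at hm ⊢; linarith
  simp only [chiProj, if_neg hout, enorm_zero, ENNReal.zero_rpow_of_pos hq]

end Windows

section Aggregate
variable {p : ℝ≥0∞}

lemma lpNorm_rpow (hp0 : p ≠ 0) (hp' : p ≠ ⊤) (c : ℤ → ℂ) :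
    lpNorm p c ^ p.toReal = ∑' j, ‖c j‖ₑ ^ p.toReal :=
  eLpNorm_count_rpow hp0 hp' c

lemma eLpNorm_lpNorm_mul_rpow (hp0 : p ≠ 0) (hp' : p ≠ ⊤) (w : ℤ → ℤ → ℂ) (c : ℤ → ℂ) :
    eLpNorm (fun m => lpNorm p (w m * c)) p Measure.count ^ p.toReal
      = ∑' j, (∑' m, ‖w m j‖ₑ ^ p.toReal) * ‖c j‖ₑ ^ p.toReal := by
  have hq : 0 < p.toReal := ENNReal.toReal_pos hp0 hp'
  simp_rw [eLpNorm_count_rpow hp0 hp', enorm_eq_self, lpNorm_rpow hp0 hp',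
    Pi.mul_apply, enorm_mul, ENNReal.mul_rpow_of_nonneg _ _ hq.le, ← ENNReal.tsum_mul_right]
  exact ENNReal.tsum_comm

lemma lpNorm_le_eLpNorm_lpNorm_mul (hp0 : p ≠ 0) (hp' : p ≠ ⊤) {w : ℤ → ℤ → ℂ}
    (hw : ∀ j, 1 ≤ ∑' m, ‖w m j‖ₑ ^ p.toReal) (c : ℤ → ℂ) :
    lpNorm p c ≤ eLpNorm (fun m => lpNorm p (w m * c)) p Measure.count := by
  rw [← ENNReal.rpow_le_rpow_iff (ENNReal.toReal_pos hp0 hp'), eLpNorm_lpNorm_mul_rpow hp0 hp',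
    lpNorm_rpow hp0 hp']
  exact ENNReal.tsum_le_tsum fun j => le_mul_of_one_le_left' (hw j)

lemma eLpNorm_lpNorm_mul_le (hp0 : p ≠ 0) (hp' : p ≠ ⊤) {w : ℤ → ℤ → ℂ} {K : ℝ≥0∞}
    (hw : ∀ j, ∑' m, ‖w m j‖ₑ ^ p.toReal ≤ K) (c : ℤ → ℂ) :
    eLpNorm (fun m => lpNorm p (w m * c)) p Measure.count ≤ K ^ (1 / p.toReal) * lpNorm p c := by
  have hq : 0 < p.toReal := ENNReal.toReal_pos hp0 hp'
  rw [← ENNReal.rpow_le_rpow_iff hq, ENNReal.mul_rpow_of_nonneg _ _ hq.le, one_div,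
    ENNReal.rpow_inv_rpow hq.ne', eLpNorm_lpNorm_mul_rpow hp0 hp', lpNorm_rpow hp0 hp',
    ← ENNReal.tsum_mul_left]
  exact ENNReal.tsum_le_tsum fun j => by gcongr; exact hw j

end Aggregate

section Stability
variable {p : ℝ≥0∞} {a : ℤ → ℤ → ℂ} {s N : ℕ}

lemma lpNorm_matMul_Psi_le (hp : 1 ≤ p) (hp' : p ≠ ⊤) (hA : normC a ≠ ⊤) (hN : 0 < N)
    (hs : s ≤ N) {c : ℤ → ℂ} (hc : lpNorm p c ≠ ⊤) (n : ℤ) :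
    lpNorm p (matMul a (Psi n N c))
      ≤ lpNorm p (Psi n N (matMul a c))
        + normC (fun i j => a i j - trunc a s i j) * lpNorm p (Psi n N c)
        + lpNorm p (Psi n N (matMul (fun i j => a i j - trunc a s i j) c))
        + 2 * ((s : ℝ≥0∞) / N * normC a) * lpNorm p (chiProj n (2 * N) c) := by
  have hp0 : p ≠ 0 := (zero_lt_one.trans_le hp).ne'
  have hmeas (f : ℤ → ℂ) : AEStronglyMeasurable f Measure.count :=
    Measurable.of_discrete.aestronglyMeasurable
  set E := fun i j => a i j - trunc a s i j
  set B := commutatorMul (trunc a s) (psi n N)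
  have hB : lpNorm p (matMul B c)
      ≤ 2 * ((s : ℝ≥0∞) / N * normC a) * lpNorm p (chiProj n (2 * N) c) := by
    rw [← matMul_commutatorMul_trunc_chiProj hs fun j => psi_eq_zero hN, ← mul_assoc]
    exact (lpNorm_matMul_le hp hp' B _).trans
      (by gcongr; exact normC_commutatorMul_trunc_le fun i j => enorm_psi_sub_le hN)
  simp only [Psi_eq_psi_mul]
  rw [matMul_mul_eq hA (fun j => enorm_le_eLpNorm_count c j hp0) hc (fun j => enorm_psi_le_one) s]
  calc lpNorm p (psi n N * matMul a c + matMul E (psi n N * c) - psi n N * matMul E c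
        + matMul B c)
      ≤ lpNorm p (psi n N * matMul a c) + lpNorm p (matMul E (psi n N * c))
        + lpNorm p (psi n N * matMul E c) + lpNorm p (matMul B c) := by
        refine (eLpNorm_add_le (hmeas _) (hmeas _) hp).trans (add_le_add ?_ le_rfl)
        refine (eLpNorm_sub_le (hmeas _) (hmeas _) hp).trans (add_le_add ?_ le_rfl)
        exact eLpNorm_add_le (hmeas _) (hmeas _) hp
    _ ≤ _ := by gcongr; exact lpNorm_matMul_le hp hp' E _

theorem mul_lpNorm_le_of_local_lower_bound (hp : 1 ≤ p) (hp' : p ≠ ⊤) (hA : normC a ≠ ⊤)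
    (hN : 0 < N) (hs : s ≤ N) {α : ℝ≥0∞}
    (hloc : ∀ m : ℤ, ∀ c : ℤ → ℂ, α * lpNorm p (chiProj (N * m) N c)
      ≤ lpNorm p (chiProj (N * m) (2 * N) (matMul a (chiProj (N * m) N c))))
    {c : ℤ → ℂ} (hc : lpNorm p c ≠ ⊤) :
    α * lpNorm p c ≤ 2 ^ (1 / p.toReal) * lpNorm p (matMul a c)
      + 2 * 4 ^ (1 / p.toReal)
        * (normC (fun i j => a i j - trunc a s i j) + (s : ℝ≥0∞) / N * normC a) * lpNorm p c := by
  have hp0 : p ≠ 0 := (zero_lt_one.trans_le hp).ne'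
  have hq : 0 < p.toReal := ENNReal.toReal_pos hp0 hp'
  have hmeas (u : ℤ → ℝ≥0∞) : AEMeasurable u Measure.count := Measurable.of_discrete.aemeasurable
  set E := fun i j => a i j - trunc a s i j
  set x := normC E
  set y := (s : ℝ≥0∞) / N * normC a
  set L : (ℤ → ℝ≥0∞) → ℝ≥0∞ := fun u => eLpNorm u p Measure.count
  set F : (ℤ → ℂ) → ℤ → ℝ≥0∞ := fun f m => lpNorm p (Psi (N * m) N f)
  set G : ℤ → ℝ≥0∞ := fun m => lpNorm p (chiProj (N * m) (2 * N) c)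
  have hF_lower : lpNorm p c ≤ L (F c) :=
    lpNorm_le_eLpNorm_lpNorm_mul hp0 hp' (one_le_tsum_enorm_psi_rpow hN _) c
  have hF_upper (f : ℤ → ℂ) : L (F f) ≤ 2 ^ (1 / p.toReal) * lpNorm p f :=
    eLpNorm_lpNorm_mul_le hp0 hp' (tsum_enorm_psi_rpow_le hN hq) f
  have hG : L G ≤ 4 ^ (1 / p.toReal) * lpNorm p c := by
    have hG_eq : G = fun m => lpNorm p (chiProj (N * m) (2 * N) 1 * c) :=
      funext fun m => by simp only [G, ← chiProj_eq_mul]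
    rw [hG_eq]
    exact eLpNorm_lpNorm_mul_le hp0 hp' (tsum_enorm_chiProj_rpow_le hN hq) c
  have hlocal (m : ℤ) :
      α * F c m ≤ F (matMul a c) m + x * F c m + F (matMul E c) m + 2 * y * G m :=
    calc α * F c m ≤ lpNorm p (chiProj (N * m) (2 * N) (matMul a (Psi (N * m) N c))) := by
          simpa only [chiProj_Psi hN] using hloc m (Psi (N * m) N c)
      _ ≤ lpNorm p (matMul a (Psi (N * m) N c)) := lpNorm_mono fun j => enorm_chiProj_le _
      _ ≤ _ := lpNorm_matMul_Psi_le hp hp' hA hN hs hc (N * m)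
  have hmink (u v : ℤ → ℝ≥0∞) : L (fun m => u m + v m) ≤ L u + L v :=
    eLpNorm_add_le (hmeas u).aestronglyMeasurable (hmeas v).aestronglyMeasurable hp
  have hsmul (r : ℝ≥0∞) (u : ℤ → ℝ≥0∞) : L (fun m => r * u m) = r * L u :=
    eLpNorm_const_mul (hmeas u) hp' r
  calc α * lpNorm p c ≤ α * L (F c) := by gcongr
    _ = L (fun m => α * F c m) := (hsmul α _).symm
    _ ≤ L (fun m => F (matMul a c) m + x * F c m + F (matMul E c) m + 2 * y * G m) :=
        eLpNorm_mono_enorm fun m => by simpa only [enorm_eq_self] using hlocal m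
    _ ≤ L (F (matMul a c)) + x * L (F c) + L (F (matMul E c)) + 2 * y * L G := by
        refine (hmink _ _).trans (add_le_add ?_ (hsmul _ _).le)
        refine (hmink _ _).trans (add_le_add ?_ le_rfl)
        exact (hmink _ _).trans (add_le_add le_rfl (hsmul _ _).le)
    _ ≤ 2 ^ (1 / p.toReal) * lpNorm p (matMul a c) + x * (2 ^ (1 / p.toReal) * lpNorm p c)
        + 2 ^ (1 / p.toReal) * (x * lpNorm p c) + 2 * y * (4 ^ (1 / p.toReal) * lpNorm p c) := by
        gcongr
        · exact hF_upper _
        · exact hF_upper c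
        · exact (hF_upper _).trans (by gcongr; exact lpNorm_matMul_le hp hp' E c)
    _ ≤ _ := by
        calc _ = 2 ^ (1 / p.toReal) * lpNorm p (matMul a c)
              + (2 * 2 ^ (1 / p.toReal) * x + 2 * 4 ^ (1 / p.toReal) * y) * lpNorm p c := by ring
          _ ≤ 2 ^ (1 / p.toReal) * lpNorm p (matMul a c)
              + (2 * 4 ^ (1 / p.toReal) * x + 2 * 4 ^ (1 / p.toReal) * y) * lpNorm p c := by
            gcongr
            norm_num
          _ = _ := by ring

end Stability

theorem stmt13 (p : ℝ≥0∞) (hp : 1 ≤ p) (hp' : p ≠ ⊤) (a : ℤ → ℤ → ℂ) (hA : normC a < ⊤)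
    (N₀ : ℕ) (hN₀ : 0 < N₀) (α : ℝ≥0∞)
    (hα : 2 * ((5 : ℝ≥0∞) + (2 : ℝ≥0∞) ^ (1 - p.toReal)) ^ (1 / p.toReal) *
        (⨅ (s : ℕ) (_ : s ≤ N₀),
          (normC (fun i j => a i j - trunc a s i j) + ((s : ℝ≥0∞) / (N₀ : ℝ≥0∞)) * normC a)) < α)
    (hyp : ∀ m : ℤ, ∀ c : ℤ → ℂ,
      α * lpNorm p (chiProj ((N₀ : ℤ) * m) N₀ c) ≤
        lpNorm p (chiProj ((N₀ : ℤ) * m) (2 * N₀) (matMul a (chiProj ((N₀ : ℤ) * m) N₀ c)))) :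
    ∃ C₁ : ℝ≥0∞, C₁ ≠ 0 ∧ ∀ c : ℤ → ℂ, lpNorm p c < ⊤ →
      C₁ * lpNorm p c ≤ lpNorm p (matMul a c) := by
  set K := 2 * ((5 : ℝ≥0∞) + (2 : ℝ≥0∞) ^ (1 - p.toReal)) ^ (1 / p.toReal)
  have hK0 : K ≠ 0 := by positivity
  have hK : K ≠ ⊤ := by finiteness
  obtain ⟨s, hs, hsα⟩ : ∃ s ≤ N₀, K * (normC (fun i j => a i j - trunc a s i j)
      + (s : ℝ≥0∞) / N₀ * normC a) < α := by
    simp_rw [ENNReal.mul_iInf_of_ne hK0 hK, iInf_lt_iff] at hα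
    obtain ⟨s, hs, h⟩ := hα
    exact ⟨s, hs, h⟩
  have hK4 : 2 * 4 ^ (1 / p.toReal) ≤ K := by
    simp only [K]
    gcongr
    exact le_add_right (by norm_num)
  have hD : (2 : ℝ≥0∞) ^ (1 / p.toReal) ≠ ⊤ := by finiteness
  refine ⟨_, (ENNReal.div_pos (tsub_pos_of_lt hsα).ne' hD).ne', fun c hc =>
    ENNReal.tsub_div_mul_le_of_mul_le_add hc.ne
      ((mul_lpNorm_le_of_local_lower_bound hp hp' hA.ne hN₀ hs hyp hc.ne).trans ?_)⟩
  gcongr
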